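/- Take any x ∈ [0,∞)ⁿ and any i, j ∈ {1,…,m} with a_{ij} ≠ 0. If x_ℓ > 0 for every ℓ ∈ S_j, then for every k ∈ S_i one has x_k > 0 or f_k(x) > 0, where f_k denotes the k-th coordinate of f. -/
import Mathlib


theorem stmt_11
    (n m : ℕ) (hm : 0 < m) (hmn : m ≤ n)
    (θ : ℝ → ℝ)
    (hθlip : LocallyLipschitz θ)
    (hθ0 : θ 0 = 0)
    (hθnn : ∀ y : ℝ, 0 ≤ θ y)
    (hθmono : StrictMonoOn θ (Set.Ici (0:ℝ)))
    (hθonto : ∀ r : ℝ, 0 ≤ r → ∃ y : ℝ, 0 ≤ y ∧ θ y = r)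
    (hθint : MeasureTheory.IntegrableOn (fun y => |Real.log (θ y)|) (Set.Ioc (0:ℝ) 1))
    (A : Matrix (Fin m) (Fin m) ℝ)
    (hAnn : ∀ i j, 0 ≤ A i j)
    (hAirr : ∀ i j, 0 < ((1 + A) ^ (m - 1)) i j)
    (B : Matrix (Fin n) (Fin m) ℝ)
    (hBnn : ∀ k j, 0 ≤ B k j)
    (hBrank : B.rank = m)
    (hBrow : ∀ k, ∃ j, B k j ≠ 0)
    (hBent : ∀ k j, B k j = 0 ∨ 1 ≤ B k j)
    (f : EuclideanSpace ℝ (Fin n) → EuclideanSpace ℝ (Fin n))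
    (hf : ∀ x : EuclideanSpace ℝ (Fin n), ∀ k : Fin n,
      f x k = ∑ i : Fin m, ∑ j : Fin m,
        A i j * (∏ l : Fin n, θ (x l) ^ (B l j)) * (B k i - B k j))
    :
    ∀ x : EuclideanSpace ℝ (Fin n), (∀ k, 0 ≤ x k) →
      ∀ i j : Fin m, A i j ≠ 0 →
      (∀ l, 0 < B l j → 0 < x l) →
      ∀ k, 0 < B k i → (0 < x k ∨ 0 < f x k) := by
  intro x hx i j hAij hSj k hBki
  rcases (hx k).lt_or_eq with h | h
  · exact Or.inl h
  right
  have hxk : x k = 0 := h.symm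
  have hBkj : B k j = 0 := by
    by_contra h'
    have hpos : 0 < B k j := lt_of_le_of_ne (hBnn k j) (Ne.symm h')
    exact absurd (hSj k hpos) (by rw [hxk]; exact lt_irrefl 0)
  -- every term is nonneg
  have hterm : ∀ i' j' : Fin m,
      0 ≤ A i' j' * (∏ l : Fin n, θ (x l) ^ (B l j')) * (B k i' - B k j') := by
    intro i' j'
    rcases (hBnn k j').eq_or_lt with h0 | hpos
    · have heq : B k i' - B k j' = B k i' := by rw [← h0]; ring
      rw [heq]
      exact mul_nonneg (mul_nonneg (hAnn i' j')
        (Finset.prod_nonneg fun l _ => Real.rpow_nonneg (hθnn _) _)) (hBnn k i')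
    · have hz : (∏ l : Fin n, θ (x l) ^ (B l j')) = 0 :=
        Finset.prod_eq_zero (Finset.mem_univ k)
          (by rw [hxk, hθ0]; exact Real.zero_rpow hpos.ne')
      rw [hz]; simp
  -- the (i,j) term is positive
  have hprodpos : 0 < ∏ l : Fin n, θ (x l) ^ (B l j) := by
    apply Finset.prod_pos
    intro l _
    rcases (hBnn l j).eq_or_lt with h0 | hpos
    · rw [← h0, Real.rpow_zero]; exact one_pos
    · have hxl : 0 < x l := hSj l hpos
      have : 0 < θ (x l) := by
        have := hθmono (Set.self_mem_Ici) (Set.mem_Ici.mpr hxl.le) hxl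
        rwa [hθ0] at this
      exact Real.rpow_pos_of_pos this _
  have hkey : 0 < A i j * (∏ l : Fin n, θ (x l) ^ (B l j)) * (B k i - B k j) := by
    apply mul_pos (mul_pos (lt_of_le_of_ne (hAnn i j) (Ne.symm hAij)) hprodpos)
    rw [hBkj]; simpa using hBki
  rw [hf x k]
  have := Finset.sum_pos' (s := (Finset.univ : Finset (Fin m)))
    (f := fun i' => ∑ j' : Fin m,
      A i' j' * (∏ l : Fin n, θ (x l) ^ (B l j')) * (B k i' - B k j'))
    (fun i' _ => Finset.sum_nonneg fun j' _ => hterm i' j')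
    ⟨i, Finset.mem_univ i,
      Finset.sum_pos' (fun j' _ => hterm i j') ⟨j, Finset.mem_univ j, hkey⟩⟩
  exact this
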